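/- The set of equilibrium points of the system (S) lying in the region {X ≥ 0, Z ≥ 0} is exactly {(0, λ, −λ² − (β/α)λ) : λ ∈ [−β/α, 0]} ∪ {P2}, where P2 = ((m−1)/(2(m+1)α), 1/((m+1)α), 0). In particular, the equilibria with X = 0 and Z ≥ 0 form the critical parabola {X = 0, Z = −Y² − (β/α)Y, −β/α ≤ Y ≤ 0}. -/

import Mathlib

open Real Set Filter Topology

/-- The self-similar exponent `α = (σ+2)/((σ-2)(m-1))`. -/
noncomputable def ssAlpha (m σ : ℝ) : ℝ := (σ + 2) / ((σ - 2) * (m - 1))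

/-- The self-similar exponent `β = 2/(σ-2)`. -/
noncomputable def ssBeta (σ : ℝ) : ℝ := 2 / (σ - 2)

/-- `(X,Y,Z)` satisfies the quadratic system (S) at time `η`:
`X' = X((m−1)Y − 2X)`, `Y' = −Y² − (β/α)Y + X − XY − Z`, `Z' = (σ−2)XZ`. -/
def SysAt (m σ : ℝ) (X Y Z : ℝ → ℝ) (η : ℝ) : Prop :=
  HasDerivAt X (X η * ((m - 1) * Y η - 2 * X η)) η ∧
  HasDerivAt Y (-(Y η) ^ 2 - ssBeta σ / ssAlpha m σ * Y η + X η - X η * Y η - Z η) η ∧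
  HasDerivAt Z ((σ - 2) * X η * Z η) η

/-- The equilibrium `P0^λ = (0, λ, −λ² − (β/α)λ)` on the critical parabola. -/
noncomputable def P0pt (m σ l : ℝ) : ℝ × ℝ × ℝ :=
  (0, l, -l ^ 2 - ssBeta σ / ssAlpha m σ * l)

/-- The equilibrium `P2 = ((m−1)/(2(m+1)α), 1/((m+1)α), 0)`. -/
noncomputable def P2pt (m σ : ℝ) : ℝ × ℝ × ℝ :=
  ((m - 1) / (2 * (m + 1) * ssAlpha m σ), 1 / ((m + 1) * ssAlpha m σ), 0)

/-! The equation `X' = 0` forces `X = 0` or `(m-1)Y = 2X`. On `X = 0` the remaining equations say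
`Z = -Y(Y + β/α)`, and `Z ≥ 0` confines `Y` to `[-β/α, 0]`. For `X > 0`, `Z' = 0` gives `Z = 0` and
`Y' = 0` becomes linear in `Y` once the factor `Y ≠ 0` is cancelled; the identity
`(m-1)α - 2β = 1` turns its root into the coordinates of `P2`. -/

lemma ssAlpha_pos {m σ : ℝ} (hm : 1 < m) (hσ : 2 < σ) : 0 < ssAlpha m σ := by
  unfold ssAlpha
  have : 0 < m - 1 := by linarith
  have : 0 < σ - 2 := by linarith
  have : 0 < σ + 2 := by linarith
  positivity

lemma ssBeta_pos {σ : ℝ} (hσ : 2 < σ) : 0 < ssBeta σ :=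
  div_pos two_pos (by linarith)

lemma sub_one_mul_ssAlpha_sub_two_mul_ssBeta {m σ : ℝ} (hm : m ≠ 1) (hσ : σ ≠ 2) :
    (m - 1) * ssAlpha m σ - 2 * ssBeta σ = 1 := by
  have hm' : m - 1 ≠ 0 := sub_ne_zero.2 hm
  have hσ' : σ - 2 ≠ 0 := sub_ne_zero.2 hσ
  unfold ssAlpha ssBeta
  field_simp
  ring

lemma neg_sq_sub_mul_nonneg_iff {c y : ℝ} (hc : 0 ≤ c) :
    0 ≤ -y ^ 2 - c * y ↔ y ∈ Icc (-c) 0 := by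
  constructor
  · intro h
    constructor <;> nlinarith
  · rintro ⟨hcy, hy⟩
    nlinarith

/-- The right-hand side of (S) vanishes at `p`, with the coefficient `β/α` replaced by `c`. -/
def IsEquilibrium (m σ c : ℝ) (p : ℝ × ℝ × ℝ) : Prop :=
  p.1 * ((m - 1) * p.2.1 - 2 * p.1) = 0 ∧
    -(p.2.1) ^ 2 - c * p.2.1 + p.1 - p.1 * p.2.1 - p.2.2 = 0 ∧
    (σ - 2) * p.1 * p.2.2 = 0

lemma isEquilibrium_zero_iff {m σ c y z : ℝ} :
    IsEquilibrium m σ c (0, y, z) ↔ z = -y ^ 2 - c * y := by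
  unfold IsEquilibrium
  simp only [zero_mul, mul_zero, sub_zero, add_zero, and_true, true_and]
  constructor <;> intro h <;> linarith

lemma isEquilibrium_iff_of_pos {m σ c x y z : ℝ} (hx : 0 < x) (hσ : σ ≠ 2) :
    IsEquilibrium m σ c (x, y, z) ↔
      z = 0 ∧ 2 * x = (m - 1) * y ∧ (m + 1) * y = m - 1 - 2 * c := by
  have hσ' : σ - 2 ≠ 0 := sub_ne_zero.2 hσ
  unfold IsEquilibrium
  constructor
  · rintro ⟨hX, hY, hZ⟩
    have hz : z = 0 := by simpa [hσ', hx.ne'] using hZ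
    have hxy : 2 * x = (m - 1) * y := by
      have := (mul_eq_zero.1 hX).resolve_left hx.ne'
      linarith
    have hy : y ≠ 0 := by
      rintro rfl
      linarith
    have hfactor : y * ((m + 1) * y - (m - 1 - 2 * c)) = 0 := by
      linear_combination (-2) * hY + (1 - y) * hxy - 2 * hz
    exact ⟨hz, hxy, sub_eq_zero.1 ((mul_eq_zero.1 hfactor).resolve_left hy)⟩
  · rintro ⟨rfl, hxy, hy⟩
    refine ⟨?_, ?_, by ring⟩
    · linear_combination (-x) * hxy
    · linear_combination (1 / 2 - y / 2) * hxy - y / 2 * hy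

lemma isEquilibrium_iff_eq_P2pt {m σ : ℝ} (hm : 1 < m) (hσ : 2 < σ) {p : ℝ × ℝ × ℝ}
    (hx : 0 < p.1) : IsEquilibrium m σ (ssBeta σ / ssAlpha m σ) p ↔ p = P2pt m σ := by
  obtain ⟨x, y, z⟩ := p
  have hα : ssAlpha m σ ≠ 0 := (ssAlpha_pos hm hσ).ne'
  have hm' : m + 1 ≠ 0 := by linarith
  have hinv : m - 1 - 2 * (ssBeta σ / ssAlpha m σ) = 1 / ssAlpha m σ := by
    field_simp
    linarith [sub_one_mul_ssAlpha_sub_two_mul_ssBeta hm.ne' hσ.ne']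
  have hY : (m + 1) * y = 1 / ssAlpha m σ ↔ y = 1 / ((m + 1) * ssAlpha m σ) := by
    rw [eq_div_iff (mul_ne_zero hm' hα), eq_div_iff hα]
    constructor <;> intro h <;> linear_combination h
  rw [isEquilibrium_iff_of_pos hx hσ.ne', hinv, hY, P2pt, Prod.mk.injEq, Prod.mk.injEq]
  constructor
  · rintro ⟨rfl, hxy, rfl⟩
    refine ⟨?_, rfl, rfl⟩
    rw [show x = (m - 1) / 2 * (1 / ((m + 1) * ssAlpha m σ)) by linarith]
    field_simp
  · rintro ⟨rfl, rfl, rfl⟩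
    refine ⟨rfl, ?_, rfl⟩
    field_simp

lemma P2pt_fst_pos {m σ : ℝ} (hm : 1 < m) (hσ : 2 < σ) : 0 < (P2pt m σ).1 := by
  have := ssAlpha_pos hm hσ
  have : 0 < m - 1 := by linarith
  unfold P2pt
  positivity

lemma setOf_isEquilibrium_fst_eq_zero (m σ : ℝ) {c : ℝ} (hc : 0 ≤ c) :
    {p : ℝ × ℝ × ℝ | p.1 = 0 ∧ 0 ≤ p.2.2 ∧ IsEquilibrium m σ c p} =
      {p | ∃ l ∈ Icc (-c) 0, p = (0, l, -l ^ 2 - c * l)} := by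
  ext ⟨x, y, z⟩
  simp only [mem_ofPred_eq]
  constructor
  · rintro ⟨rfl, hz, h⟩
    rw [isEquilibrium_zero_iff] at h
    subst h
    exact ⟨y, (neg_sq_sub_mul_nonneg_iff hc).1 hz, rfl⟩
  · rintro ⟨l, hl, h⟩
    simp only [Prod.mk.injEq] at h
    obtain ⟨rfl, rfl, rfl⟩ := h
    exact ⟨rfl, (neg_sq_sub_mul_nonneg_iff hc).2 hl, isEquilibrium_zero_iff.2 rfl⟩

lemma setOf_isEquilibrium_fst_nonneg {m σ : ℝ} (hm : 1 < m) (hσ : 2 < σ) :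
    {p : ℝ × ℝ × ℝ | 0 ≤ p.1 ∧ 0 ≤ p.2.2 ∧ IsEquilibrium m σ (ssBeta σ / ssAlpha m σ) p} =
      {p | p.1 = 0 ∧ 0 ≤ p.2.2 ∧ IsEquilibrium m σ (ssBeta σ / ssAlpha m σ) p} ∪
        {P2pt m σ} := by
  ext p
  constructor
  · rintro ⟨hx, hz, h⟩
    rcases hx.eq_or_lt with hx | hx
    · exact Or.inl ⟨hx.symm, hz, h⟩
    · exact Or.inr ((isEquilibrium_iff_eq_P2pt hm hσ hx).1 h)
  · rintro (⟨hx, hz, h⟩ | rfl)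
    · exact ⟨hx.ge, hz, h⟩
    · have hx := P2pt_fst_pos hm hσ
      exact ⟨hx.le, le_rfl, (isEquilibrium_iff_eq_P2pt hm hσ hx).2 rfl⟩

theorem equilibria_classification_general
    (m σ : ℝ) (hm1 : 1 < m) (hσ : 2 < σ) :
    {p : ℝ × ℝ × ℝ | 0 ≤ p.1 ∧ 0 ≤ p.2.2 ∧
        p.1 * ((m - 1) * p.2.1 - 2 * p.1) = 0 ∧
        -(p.2.1) ^ 2 - ssBeta σ / ssAlpha m σ * p.2.1 + p.1 - p.1 * p.2.1 - p.2.2 = 0 ∧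
        (σ - 2) * p.1 * p.2.2 = 0} =
      {p : ℝ × ℝ × ℝ |
          ∃ l ∈ Icc (-(ssBeta σ / ssAlpha m σ)) (0 : ℝ), p = P0pt m σ l} ∪
        {P2pt m σ} ∧
    {p : ℝ × ℝ × ℝ | p.1 = 0 ∧ 0 ≤ p.2.2 ∧
        p.1 * ((m - 1) * p.2.1 - 2 * p.1) = 0 ∧
        -(p.2.1) ^ 2 - ssBeta σ / ssAlpha m σ * p.2.1 + p.1 - p.1 * p.2.1 - p.2.2 = 0 ∧
        (σ - 2) * p.1 * p.2.2 = 0} =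
      {p : ℝ × ℝ × ℝ |
          ∃ l ∈ Icc (-(ssBeta σ / ssAlpha m σ)) (0 : ℝ), p = P0pt m σ l} := by
  have hc : 0 ≤ ssBeta σ / ssAlpha m σ := (div_pos (ssBeta_pos hσ) (ssAlpha_pos hm1 hσ)).le
  have hX0 : {p : ℝ × ℝ × ℝ | p.1 = 0 ∧ 0 ≤ p.2.2 ∧
      IsEquilibrium m σ (ssBeta σ / ssAlpha m σ) p} =
        {p | ∃ l ∈ Icc (-(ssBeta σ / ssAlpha m σ)) 0, p = P0pt m σ l} :=
    setOf_isEquilibrium_fst_eq_zero m σ hc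
  exact ⟨hX0 ▸ setOf_isEquilibrium_fst_nonneg hm1 hσ, hX0⟩

/-- the equilibria of (S) in `{X ≥ 0, Z ≥ 0}` are exactly the critical
parabola `{(0, λ, −λ² − (β/α)λ) : λ ∈ [−β/α, 0]}` together with `P2`; in particular
the equilibria with `X = 0`, `Z ≥ 0` form exactly the critical parabola. -/
theorem equilibria_classification
    (m σ : ℝ) (hm1 : 1 < m) (hm2 : m < 2) (hσ : 2 < σ) :
    {p : ℝ × ℝ × ℝ | 0 ≤ p.1 ∧ 0 ≤ p.2.2 ∧
        p.1 * ((m - 1) * p.2.1 - 2 * p.1) = 0 ∧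
        -(p.2.1) ^ 2 - ssBeta σ / ssAlpha m σ * p.2.1 + p.1 - p.1 * p.2.1 - p.2.2 = 0 ∧
        (σ - 2) * p.1 * p.2.2 = 0} =
      {p : ℝ × ℝ × ℝ |
          ∃ l ∈ Icc (-(ssBeta σ / ssAlpha m σ)) (0 : ℝ), p = P0pt m σ l} ∪
        {P2pt m σ} ∧
    {p : ℝ × ℝ × ℝ | p.1 = 0 ∧ 0 ≤ p.2.2 ∧
        p.1 * ((m - 1) * p.2.1 - 2 * p.1) = 0 ∧
        -(p.2.1) ^ 2 - ssBeta σ / ssAlpha m σ * p.2.1 + p.1 - p.1 * p.2.1 - p.2.2 = 0 ∧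
        (σ - 2) * p.1 * p.2.2 = 0} =
      {p : ℝ × ℝ × ℝ |
          ∃ l ∈ Icc (-(ssBeta σ / ssAlpha m σ)) (0 : ℝ), p = P0pt m σ l} :=
  equilibria_classification_general m σ hm1 hσ
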